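/- Propagated EP error signal: under the hypotheses of the previous statement, with s_β the nudged equilibria of Ẽ under constant nudging δ, the error signal δu := d/dβ [∇₃Ẽ(s_β, θ, u, ω)]|_{β=0} equals ∇²_{1,3}Ẽ(s⋆, θ, u, ω) · λ, where λ = −H⁻¹δ. That is, δu = −∇²_{1,3}Ẽ(s⋆, θ, u, ω) · (∇₁²Ẽ(s⋆, θ, u, ω))⁻¹ · δ. -/

import Mathlib

/-!
Differentiating the nudged equilibrium condition `β • δ + ∇₁Ẽ(s_β) = 0` at `β = 0` gives
`H ṡ₀ = -δ`, hence `ṡ₀ = λ = -H⁻¹ δ`. By the chain rule `δu = ∂ₛ(∇₃Ẽ)(s⋆) λ`, and by the symmetry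
of the second derivative of the `C²` function `Ẽ`, `∂ₛ(∇₃Ẽ)` is the adjoint of
`∂ᵤ(∇₁Ẽ) = ∇²_{1,3}Ẽ`.
-/

open scoped RealInnerProductSpace

noncomputable section

abbrev Euc (n : ℕ) := EuclideanSpace ℝ (Fin n)

open Filter Topology InnerProductSpace ContinuousLinearMap

section PartialGradient

variable {E F G : Type*}
  [NormedAddCommGroup E] [NormedSpace ℝ E]
  [NormedAddCommGroup F] [InnerProductSpace ℝ F] [CompleteSpace F]
  [NormedAddCommGroup G] [NormedSpace ℝ G]

theorem gradient_comp_const_add {f : G → ℝ} {a : G} (j : F →L[ℝ] G) {y : F}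
    (hf : DifferentiableAt ℝ f (a + j y)) :
    gradient (fun y' => f (a + j y')) y = (toDual ℝ F).symm ((fderiv ℝ f (a + j y)).comp j) :=
  congrArg _ (hf.hasFDerivAt.comp y (j.hasFDerivAt.const_add a)).fderiv

theorem hasFDerivAt_gradient_comp_add {f : G → ℝ} (hf : ContDiff ℝ 2 f)
    (i : E →L[ℝ] G) (j : F →L[ℝ] G) (x : E) (y : F) :
    HasFDerivAt (fun x' => gradient (fun y' => f (i x' + j y')) y)
      ((toDual ℝ F).symm.toContinuousLinearEquiv.toContinuousLinearMap ∘L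
        (compL ℝ F G ℝ).flip j ∘L fderiv ℝ (fderiv ℝ f) (i x + j y) ∘L i) x := by
  have hf1 : Differentiable ℝ f := hf.differentiable (by norm_num)
  have hf2 : Differentiable ℝ (fderiv ℝ f) :=
    (hf.fderiv_right (m := 1) (by norm_num)).differentiable (by norm_num)
  simp_rw [gradient_comp_const_add j (hf1 _)]
  exact (((toDual ℝ F).symm.toContinuousLinearEquiv.toContinuousLinearMap ∘L
    (compL ℝ F G ℝ).flip j).hasFDerivAt.comp x
      ((hf2 _).hasFDerivAt.comp x ((i.hasFDerivAt).add_const (j y))))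

theorem inner_fderiv_gradient_comp_add {f : G → ℝ} (hf : ContDiff ℝ 2 f)
    (i : E →L[ℝ] G) (j : F →L[ℝ] G) (x v : E) (y w : F) :
    ⟪fderiv ℝ (fun x' => gradient (fun y' => f (i x' + j y')) y) x v, w⟫ =
      fderiv ℝ (fderiv ℝ f) (i x + j y) (i v) (j w) := by
  rw [(hasFDerivAt_gradient_comp_add hf i j x y).fderiv]
  simp [toDual_symm_apply]

theorem ContDiff.differentiable_gradient {g : F → ℝ} (hg : ContDiff ℝ 2 g) :
    Differentiable ℝ (gradient g) :=
  (toDual ℝ F).symm.toContinuousLinearEquiv.toContinuousLinearMap.differentiable.comp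
    ((hg.fderiv_right (m := 1) (by norm_num)).differentiable (by norm_num))

theorem gradient_snd_eq_comp_inl_add_inr (f : E × F → ℝ) (y : F) :
    (fun x' => gradient (fun y' => f (x', y')) y) =
      fun x' => gradient (fun y' => f (inl ℝ E F x' + inr ℝ E F y')) y := by
  simp

theorem differentiableAt_gradient_snd {f : E × F → ℝ} (hf : ContDiff ℝ 2 f) (x : E) (y : F) :
    DifferentiableAt ℝ (fun x' => gradient (fun y' => f (x', y')) y) x := by
  rw [gradient_snd_eq_comp_inl_add_inr]
  exact (hasFDerivAt_gradient_comp_add hf _ _ x y).differentiableAt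

end PartialGradient

theorem adjoint_fderiv_gradient_fst {E F : Type*}
    [NormedAddCommGroup E] [InnerProductSpace ℝ E] [CompleteSpace E]
    [NormedAddCommGroup F] [InnerProductSpace ℝ F] [CompleteSpace F]
    {f : E × F → ℝ} (hf : ContDiff ℝ 2 f) (x : E) (y : F) :
    adjoint (fderiv ℝ (fun y' => gradient (fun x' => f (x', y')) x) y) =
      fderiv ℝ (fun x' => gradient (fun y' => f (x', y')) y) x := by
  have hfst : (fun y' => gradient (fun x' => f (x', y')) x) =
      fun y' => gradient (fun x' => f (inr ℝ E F y' + inl ℝ E F x')) x := by simp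
  symm
  rw [eq_adjoint_iff, hfst, gradient_snd_eq_comp_inl_add_inr]
  intro v w
  rw [inner_fderiv_gradient_comp_add hf, real_inner_comm, inner_fderiv_gradient_comp_add hf,
    add_comm]
  exact hf.contDiffAt.isSymmSndFDerivAt (by simp [minSmoothness_of_isRCLikeNormedField]) _ _

theorem fderiv_apply_deriv_eq_neg_of_smul_add_eq_zero {E F : Type*}
    [NormedAddCommGroup E] [NormedSpace ℝ E] [NormedAddCommGroup F] [NormedSpace ℝ F]
    {g : E → F} {s : ℝ → E} (hg : DifferentiableAt ℝ g (s 0)) (hs : DifferentiableAt ℝ s 0)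
    {δ : F} (h : ∀ᶠ β in 𝓝 0, β • δ + g (s β) = 0) :
    fderiv ℝ g (s 0) (deriv s 0) = -δ := by
  have hcomp : (fun β => g (s β)) =ᶠ[𝓝 0] fun β => -(β • δ) :=
    h.mono fun β hβ => eq_neg_of_add_eq_zero_right hβ
  rw [← fderiv_comp_deriv _ hg hs, Function.comp_def, hcomp.deriv_eq, deriv.fun_neg]
  simpa using ((hasDerivAt_id (0 : ℝ)).smul_const δ).deriv

theorem stmt_13_general {n p m q : ℕ}
    (Et : Euc n → Euc p → Euc m → Euc q → ℝ)
    (hEt : ContDiff ℝ 2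
      (fun t : Euc n × Euc p × Euc m × Euc q => Et t.1 t.2.1 t.2.2.1 t.2.2.2))
    (θ : Euc p) (u : Euc m) (ω : Euc q) (sstar : Euc n)
    (H Hinv : Euc n →L[ℝ] Euc n)
    (hH : H = fderiv ℝ (fun s' => gradient (fun s'' => Et s'' θ u ω) s') sstar)
    (h1 : Hinv.comp H = ContinuousLinearMap.id ℝ (Euc n))
    (δ : Euc n) (s : ℝ → Euc n) (hs : DifferentiableAt ℝ s 0) (hs0 : s 0 = sstar)
    (ε : ℝ) (hε : 0 < ε)
    (hnudge : ∀ β ∈ Set.Ioo (-ε) ε,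
      β • δ + gradient (fun s' => Et s' θ u ω) (s β) = 0)
    (lam : Euc n) (hlam : H lam + δ = 0) :
    deriv (fun β => gradient (fun u' => Et (s β) θ u' ω) u) 0 =
      (ContinuousLinearMap.adjoint
        (fderiv ℝ (fun u' => gradient (fun s' => Et s' θ u' ω) sstar) u)) lam ∧
    deriv (fun β => gradient (fun u' => Et (s β) θ u' ω) u) 0 =
      -((ContinuousLinearMap.adjoint
        (fderiv ℝ (fun u' => gradient (fun s' => Et s' θ u' ω) sstar) u)) (Hinv δ)) := by
  set f : Euc n × Euc m → ℝ := fun z => Et z.1 θ z.2 ω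
  have hf : ContDiff ℝ 2 f := hEt.comp (contDiff_fst.prodMk
    (contDiff_const.prodMk (contDiff_snd.prodMk contDiff_const)))
  have hHinv (x : Euc n) : Hinv (H x) = x := by simpa using DFunLike.congr_fun h1 x
  have hHs : H (deriv s 0) = -δ := by
    rw [hH, ← hs0]
    refine fderiv_apply_deriv_eq_neg_of_smul_add_eq_zero ?_ hs ?_
    · exact (hf.comp (contDiff_id.prodMk contDiff_const)).differentiable_gradient _
    · exact eventually_of_mem (Ioo_mem_nhds (neg_neg_iff_pos.mpr hε) hε) hnudge
  have hds : deriv s 0 = lam := by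
    rw [← hHinv (deriv s 0), ← hHinv lam, hHs, eq_neg_of_add_eq_zero_left hlam]
  have hδu : deriv (fun β => gradient (fun u' => f (s β, u')) u) 0 =
      fderiv ℝ (fun x' => gradient (fun y' => f (x', y')) u) sstar lam := by
    rw [← hds, ← hs0]
    exact fderiv_comp_deriv _ (differentiableAt_gradient_snd hf _ u) hs
  have hlam' : Hinv δ = -lam := by
    rw [eq_neg_of_add_eq_zero_right hlam, map_neg, hHinv]
  change deriv (fun β => gradient (fun u' => f (s β, u')) u) 0 = _ ∧
    deriv (fun β => gradient (fun u' => f (s β, u')) u) 0 = _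
  rw [hδu, hlam', map_neg, neg_neg, and_self, adjoint_fderiv_gradient_fst hf]

/-- Propagated EP error signal:
`δu := d/dβ[∇₃Ẽ(s_β,θ,u,ω)]|₀ = ∇²_{1,3}Ẽ(s⋆,…)·λ` with `λ = −H⁻¹δ`, i.e.
`δu = −∇²_{1,3}Ẽ(s⋆,…)·(∇₁²Ẽ(s⋆,…))⁻¹·δ`. -/
theorem stmt_13 {n p m q : ℕ}
    (Et : Euc n → Euc p → Euc m → Euc q → ℝ)
    (hEt : ContDiff ℝ 2
      (fun t : Euc n × Euc p × Euc m × Euc q => Et t.1 t.2.1 t.2.2.1 t.2.2.2))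
    (θ : Euc p) (u : Euc m) (ω : Euc q) (sstar : Euc n)
    (hcrit : gradient (fun s' => Et s' θ u ω) sstar = 0)
    (H Hinv : Euc n →L[ℝ] Euc n)
    (hH : H = fderiv ℝ (fun s' => gradient (fun s'' => Et s'' θ u ω) s') sstar)
    (h1 : Hinv.comp H = ContinuousLinearMap.id ℝ (Euc n))
    (h2 : H.comp Hinv = ContinuousLinearMap.id ℝ (Euc n))
    (δ : Euc n) (s : ℝ → Euc n) (hs : DifferentiableAt ℝ s 0) (hs0 : s 0 = sstar)
    (ε : ℝ) (hε : 0 < ε)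
    (hnudge : ∀ β ∈ Set.Ioo (-ε) ε,
      β • δ + gradient (fun s' => Et s' θ u ω) (s β) = 0)
    (lam : Euc n) (hlam : H lam + δ = 0) :
    deriv (fun β => gradient (fun u' => Et (s β) θ u' ω) u) 0 =
      (ContinuousLinearMap.adjoint
        (fderiv ℝ (fun u' => gradient (fun s' => Et s' θ u' ω) sstar) u)) lam ∧
    deriv (fun β => gradient (fun u' => Et (s β) θ u' ω) u) 0 =
      -((ContinuousLinearMap.adjoint
        (fderiv ℝ (fun u' => gradient (fun s' => Et s' θ u' ω) sstar) u)) (Hinv δ)) :=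
  stmt_13_general Et hEt θ u ω sstar H Hinv hH h1 δ s hs hs0 ε hε hnudge lam hlam
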